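/- arXiv:math/0609827 — 4 statements merged into one kernel-verified Lean document; each statement's English description precedes it below -/
import Mathlib

section
/- Let v : ℝ² → ℝ² be a unit Lipschitz vector field with constant K, 0 < T < 1/K, and 1 ≤ p < ∞. Then for every F ∈ L^p(ℝ²), the averages M_t(F)(X) = (1/(2t))∫_{−t}^{t} F(X + s·v(X)) ds converge to F in L^p norm as t → 0. -/
/-
The segment map `X ↦ X + s • v X` is a Lipschitz perturbation of the identity, so for `|s| ≤ T`
with `T K < 1` it is `(1 - T K)⁻¹`-antilipschitz; since Haar measure is a multiple of the
top-dimensional Hausdorff measure, preimages under it have measure at most `(1 - T K)⁻ᵈ` times the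
original. Integrating over `s`, the map `(X, s) ↦ X + s • v X` pushes `μ × (uniform law on
[-t, t])` below a fixed multiple of `μ`; with Jensen's inequality in `s` this bounds `M_t` on `Lᵖ`
uniformly in `t ∈ (0, T)`. For continuous compactly supported `g`, uniform continuity gives
`M_t g → g` uniformly on a fixed compact set, hence in `Lᵖ`, and density of such `g` in `Lᵖ`
finishes the proof by an `ε/3` argument.
-/

open MeasureTheory Measure Filter Topology ProbabilityTheory Set
open scoped NNReal ENNReal

namespace MeasureTheory

theorem Measure.map_prod_le_smul {α β γ : Type*} [MeasurableSpace α] [MeasurableSpace β]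
    [MeasurableSpace γ] {μ : Measure α} {ν : Measure β} {τ : Measure γ} [SFinite μ] [SFinite ν]
    {f : α × β → γ} (hf : Measurable f) {c : ℝ≥0∞}
    (h : ∀ᵐ y ∂ν, map (fun x => f (x, y)) μ ≤ c • τ) : map f (μ.prod ν) ≤ (c * ν univ) • τ := by
  refine Measure.le_iff.2 fun s hs => ?_
  rw [map_apply hf hs, prod_apply_symm (hf hs), Measure.smul_apply, smul_eq_mul]
  calc ∫⁻ y, μ ((fun x => (x, y)) ⁻¹' (f ⁻¹' s)) ∂ν ≤ ∫⁻ _, c * τ s ∂ν := by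
        refine lintegral_mono_ae (h.mono fun y hy => ?_)
        have hys := Measure.le_iff.1 hy s hs
        rwa [map_apply (f := fun x => f (x, y)) (by fun_prop) hs, Measure.smul_apply] at hys
    _ = c * ν univ * τ s := by rw [lintegral_const]; ring

theorem enorm_integral_le_eLpNorm {α E : Type*} [MeasurableSpace α] [NormedAddCommGroup E]
    [NormedSpace ℝ E] {ν : Measure α} [IsZeroOrProbabilityMeasure ν] {p : ℝ≥0∞} (hp : 1 ≤ p)
    {f : α → E} (hf : AEStronglyMeasurable f ν) : ‖∫ x, f x ∂ν‖ₑ ≤ eLpNorm f p ν := by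
  rcases eq_zero_or_isProbabilityMeasure ν with rfl | _
  · simp
  calc ‖∫ x, f x ∂ν‖ₑ ≤ eLpNorm f 1 ν :=
        (enorm_integral_le_lintegral_enorm f).trans_eq eLpNorm_one_eq_lintegral_enorm.symm
    _ ≤ eLpNorm f p ν := eLpNorm_le_eLpNorm_of_exponent_le hp hf

theorem eLpNorm_integral_prod_right_le {α β E : Type*} [MeasurableSpace α] [MeasurableSpace β]
    [NormedAddCommGroup E] [NormedSpace ℝ E] {μ : Measure α} {ν : Measure β} [SFinite μ]
    [IsZeroOrProbabilityMeasure ν] {p : ℝ≥0∞} (hp1 : 1 ≤ p) (hp : p ≠ ∞) {f : α × β → E}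
    (hf : AEStronglyMeasurable f (μ.prod ν)) :
    eLpNorm (fun x => ∫ y, f (x, y) ∂ν) p μ ≤ eLpNorm f p (μ.prod ν) := by
  have hp0 : p ≠ 0 := (zero_lt_one.trans_le hp1).ne'
  rw [eLpNorm_eq_lintegral_rpow_enorm_toReal hp0 hp, eLpNorm_eq_lintegral_rpow_enorm_toReal hp0 hp,
    lintegral_prod _ (hf.enorm.pow_const _)]
  gcongr 1
  refine lintegral_mono_ae (hf.prodMk_left.mono fun x hx => ?_)
  calc ‖∫ y, f (x, y) ∂ν‖ₑ ^ p.toReal ≤ eLpNorm (fun y => f (x, y)) p ν ^ p.toReal := by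
        gcongr; exact enorm_integral_le_eLpNorm hp1 hx
    _ = ∫⁻ y, ‖f (x, y)‖ₑ ^ p.toReal ∂ν := by
        rw [eLpNorm_eq_lintegral_rpow_enorm_toReal hp0 hp, ← ENNReal.rpow_mul, one_div,
          inv_mul_cancel₀ (ENNReal.toReal_pos hp0 hp).ne', ENNReal.rpow_one]

theorem MemLp.integrable_prod_right_ae {α β E : Type*} [MeasurableSpace α] [MeasurableSpace β]
    [NormedAddCommGroup E] {μ : Measure α} {ν : Measure β} [SFinite μ]
    [IsFiniteMeasure ν] {p : ℝ≥0∞} (hp1 : 1 ≤ p) (hp : p ≠ ∞) {f : α × β → E}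
    (hf : MemLp f p (μ.prod ν)) : ∀ᵐ x ∂μ, Integrable (fun y => f (x, y)) ν := by
  have hp0 : p ≠ 0 := (zero_lt_one.trans_le hp1).ne'
  have hfin := lintegral_rpow_enorm_lt_top_of_eLpNorm_lt_top hp0 hp hf.2
  rw [lintegral_prod _ (hf.1.enorm.pow_const _)] at hfin
  filter_upwards [ae_lt_top' (hf.1.enorm.pow_const _).lintegral_prod_right' hfin.ne,
    hf.1.prodMk_left] with x hx hmeas
  refine MemLp.integrable hp1 ⟨hmeas, ?_⟩
  rw [eLpNorm_eq_lintegral_rpow_enorm_toReal hp0 hp]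
  exact ENNReal.rpow_lt_top_of_nonneg (by positivity) hx.ne

theorem norm_integral_sub_le_of_ae_norm_sub_le {α E : Type*} [MeasurableSpace α]
    [NormedAddCommGroup E] [NormedSpace ℝ E] [CompleteSpace E] {ν : Measure α}
    [IsProbabilityMeasure ν] {f : α → E}
    (hf : AEStronglyMeasurable f ν) {c : E} {ε : ℝ} (h : ∀ᵐ x ∂ν, ‖f x - c‖ ≤ ε) :
    ‖∫ x, f x ∂ν - c‖ ≤ ε := by
  have hfc : Integrable (fun x => f x - c) ν := .of_bound (hf.sub aestronglyMeasurable_const) ε h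
  have hf : Integrable f ν := (hfc.add (integrable_const c)).congr (.of_forall fun x => by simp)
  calc ‖∫ x, f x ∂ν - c‖ = ‖∫ x, (f x - c) ∂ν‖ := by
        rw [integral_sub hf (integrable_const c), integral_const, probReal_univ, one_smul]
    _ ≤ ε := by simpa using norm_integral_le_of_norm_le_const h

theorem tendsto_eLpNorm_of_forall_abs_le_of_support_subset {α ι : Type*} [MeasurableSpace α]
    {μ : Measure α} {l : Filter ι} {f : ι → α → ℝ} {s : Set α} (hs : μ s ≠ ∞) (p : ℝ≥0∞)
    (hsupp : ∀ᶠ i in l, ∀ x ∉ s, f i x = 0) (hf : ∀ ε > 0, ∀ᶠ i in l, ∀ x, |f i x| ≤ ε) :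
    Tendsto (fun i => eLpNorm (f i) p μ) l (𝓝 0) := by
  have hbound : ∀ ε > 0, ∀ᶠ i in l,
      eLpNorm (f i) p μ ≤ ENNReal.ofReal ε * μ s ^ (1 / p.toReal) := by
    intro ε hε
    filter_upwards [hsupp, hf ε hε] with i hzero hle
    refine (eLpNorm_mono_real (g := s.indicator fun _ => ε) fun x => ?_).trans ?_
    · by_cases hx : x ∈ s
      · simpa [hx] using hle x
      · simp [hx, hzero x hx]
    · simpa [Real.enorm_eq_ofReal hε.le] using eLpNorm_indicator_const_le ε p
  have hlim : Tendsto (fun ε => ENNReal.ofReal ε * μ s ^ (1 / p.toReal)) (𝓝[>] 0) (𝓝 0) := by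
    have h0 : Tendsto ENNReal.ofReal (𝓝[>] 0) (𝓝 0) := by
      simpa using (ENNReal.continuous_ofReal.tendsto 0).mono_left nhdsWithin_le_nhds
    simpa using ENNReal.Tendsto.mul_const h0
      (Or.inr (ENNReal.rpow_ne_top_of_nonneg (by positivity) hs))
  refine ENNReal.tendsto_nhds_zero.2 fun δ hδ => ?_
  obtain ⟨ε, hεδ, hε⟩ := ((ENNReal.tendsto_nhds_zero.1 hlim δ hδ).and self_mem_nhdsWithin).exists
  exact (hbound ε hε).mono fun i hi => hi.trans hεδ

theorem MemLp.tendsto_eLpNorm_sub_self_of_uniformly_bounded {α ι : Type*} [TopologicalSpace α]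
    [NormalSpace α] [MeasurableSpace α] [BorelSpace α] [R1Space α] [WeaklyLocallyCompactSpace α]
    {μ : Measure α} [μ.Regular] {l : Filter ι} {p : ℝ≥0∞} (hp1 : 1 ≤ p) (hp : p ≠ ∞)
    {A : ι → (α → ℝ) → α → ℝ} {C : ℝ≥0∞} (hC : C ≠ ∞)
    (hmeas : ∀ᶠ i in l, ∀ f, MemLp f p μ → AEStronglyMeasurable (A i f) μ)
    (hbound : ∀ᶠ i in l, ∀ f, MemLp f p μ → eLpNorm (A i f) p μ ≤ C * eLpNorm f p μ)
    (hsub : ∀ᶠ i in l, ∀ f g, MemLp f p μ → MemLp g p μ → A i f - A i g =ᵐ[μ] A i (f - g))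
    (hcc : ∀ g, Continuous g → HasCompactSupport g →
      Tendsto (fun i => eLpNorm (A i g - g) p μ) l (𝓝 0))
    {f : α → ℝ} (hf : MemLp f p μ) : Tendsto (fun i => eLpNorm (A i f - f) p μ) l (𝓝 0) := by
  refine ENNReal.tendsto_nhds_zero.2 fun ε hε => ?_
  set δ := ε / 2 / (C + 1)
  have hδ : δ ≠ 0 := (ENNReal.div_pos (ENNReal.half_pos hε.ne').ne' (by simpa using hC)).ne'
  obtain ⟨g, hgs, hfg, hgc, hg⟩ := hf.exists_hasCompactSupport_eLpNorm_sub_le hp hδ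
  filter_upwards [hmeas, hbound, hsub, ENNReal.tendsto_nhds_zero.1 (hcc g hgc hgs) (ε / 2)
    (ENNReal.half_pos hε.ne')] with i hmi hbi hsi hci
  have hdecomp : A i f - f =ᵐ[μ] A i (f - g) + (A i g - g) + (g - f) := by
    filter_upwards [hsi f g hf hg] with x hx
    simp only [Pi.add_apply, Pi.sub_apply] at hx ⊢
    rw [← hx]; ring
  calc eLpNorm (A i f - f) p μ = eLpNorm (A i (f - g) + (A i g - g) + (g - f)) p μ :=
        eLpNorm_congr_ae hdecomp
    _ ≤ eLpNorm (A i (f - g)) p μ + eLpNorm (A i g - g) p μ + eLpNorm (g - f) p μ := by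
        refine (eLpNorm_add_le ?_ (hg.1.sub hf.1) hp1).trans ?_
        · exact (hmi _ (hf.sub hg)).add ((hmi g hg).sub hg.1)
        gcongr
        exact eLpNorm_add_le (hmi _ (hf.sub hg)) ((hmi g hg).sub hg.1) hp1
    _ ≤ C * δ + ε / 2 + δ := by
        gcongr
        · exact (hbi _ (hf.sub hg)).trans (by gcongr)
        · rwa [eLpNorm_sub_comm]
    _ = (C + 1) * δ + ε / 2 := by ring
    _ ≤ ε / 2 + ε / 2 := by gcongr; exact ENNReal.mul_div_le
    _ = ε := ENNReal.add_halves ε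

end MeasureTheory

theorem AntilipschitzWith.addHaar_preimage_le {E : Type*} [NormedAddCommGroup E]
    [NormedSpace ℝ E] [FiniteDimensional ℝ E] [MeasurableSpace E] [BorelSpace E]
    (μ : Measure E) [μ.IsAddHaarMeasure] {f : E → E} {L : ℝ≥0} (hf : AntilipschitzWith L f)
    (s : Set E) : μ (f ⁻¹' s) ≤ L ^ Module.finrank ℝ E * μ s := by
  have hH := hf.hausdorffMeasure_preimage_le (Nat.cast_nonneg (Module.finrank ℝ E)) s
  rw [ENNReal.rpow_natCast] at hH
  rw [isAddLeftInvariant_eq_smul μ μH[Module.finrank ℝ E]]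
  simp only [Measure.smul_apply, ENNReal.smul_def, smul_eq_mul]
  rw [mul_left_comm]
  gcongr

theorem integral_cond_Ioc {a b : ℝ} (hab : a ≤ b) (f : ℝ → ℝ) :
    ∫ x, f x ∂volume[|Ioc a b] = (b - a)⁻¹ * ∫ x in a..b, f x := by
  rw [ProbabilityTheory.cond, integral_smul_measure, intervalIntegral.integral_of_le hab,
    Real.volume_Ioc, ENNReal.toReal_inv, ENNReal.toReal_ofReal (sub_nonneg.2 hab), smul_eq_mul]

theorem isProbabilityMeasure_cond_Ioc {t : ℝ} (ht : 0 < t) :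
    IsProbabilityMeasure (volume[|Ioc (-t) t]) :=
  cond_isProbabilityMeasure_of_finite (by simp [Real.volume_Ioc]; linarith) (by simp)

theorem ae_cond_Ioc_abs_le (t : ℝ) : ∀ᵐ s ∂volume[|Ioc (-t) t], |s| ≤ t :=
  (ae_cond_mem measurableSet_Ioc).mono fun _ hs => abs_le.2 ⟨hs.1.le, hs.2⟩

section LineAverage

variable {E : Type*} [NormedAddCommGroup E] [NormedSpace ℝ E]

def lineShift (v : E → E) (P : E × ℝ) : E := P.1 + P.2 • v P.1

/-- The paper's `M_t F` is `lineAverage v volume[|Ioc (-t) t] F`, the average against the uniform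
law on `[-t, t]` (the zero measure when `t ≤ 0`). -/
noncomputable def lineAverage (v : E → E) (ν : Measure ℝ) (F : E → ℝ) (X : E) : ℝ :=
  ∫ s, F (lineShift v (X, s)) ∂ν

theorem continuous_lineShift {v : E → E} (hv : Continuous v) : Continuous (lineShift v) := by
  unfold lineShift; fun_prop

theorem antilipschitzWith_lineShift {v : E → E} {K T : ℝ≥0} (hv : LipschitzWith K v)
    (hTK : T * K < 1) {s : ℝ} (hs : ‖s‖₊ ≤ T) :
    AntilipschitzWith (1 - T * K)⁻¹ fun X => lineShift v (X, s) := by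
  have hsv : LipschitzWith (T * K) fun X => s • v X :=
    ((lipschitzWith_smul s).comp hv).weaken (by gcongr)
  have h := AntilipschitzWith.id.add_lipschitzWith hsv (by rwa [inv_one])
  rwa [inv_one] at h

section Pushforward

variable [MeasurableSpace E] {μ : Measure E} {ν : Measure ℝ} [IsZeroOrProbabilityMeasure ν]
  {v : E → E} {c : ℝ≥0} {p : ℝ≥0∞}

theorem aestronglyMeasurable_lineAverage (hm : Measurable (lineShift v))
    (hc : map (lineShift v) (μ.prod ν) ≤ c • μ) {F : E → ℝ} (hF : AEStronglyMeasurable F μ) :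
    AEStronglyMeasurable (lineAverage v ν F) μ :=
  (hF.comp_quasiMeasurePreserving ⟨hm, absolutelyContinuous_of_le_smul hc⟩).integral_prod_right'

theorem eLpNorm_lineAverage_le [SFinite μ] (hm : Measurable (lineShift v))
    (hc : map (lineShift v) (μ.prod ν) ≤ c • μ) (hp1 : 1 ≤ p) (hp : p ≠ ∞) {F : E → ℝ}
    (hF : AEStronglyMeasurable F μ) :
    eLpNorm (lineAverage v ν F) p μ ≤ (c : ℝ≥0∞) ^ (1 / p).toReal * eLpNorm F p μ := by
  have hFc : AEStronglyMeasurable F (map (lineShift v) (μ.prod ν)) :=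
    hF.mono_ac (absolutelyContinuous_of_le_smul hc)
  calc eLpNorm (lineAverage v ν F) p μ ≤ eLpNorm (F ∘ lineShift v) p (μ.prod ν) :=
        eLpNorm_integral_prod_right_le (f := F ∘ lineShift v) hp1 hp
          (hF.comp_quasiMeasurePreserving ⟨hm, absolutelyContinuous_of_le_smul hc⟩)
    _ = eLpNorm F p (map (lineShift v) (μ.prod ν)) := (eLpNorm_map_measure hFc hm.aemeasurable).symm
    _ ≤ eLpNorm F p ((c : ℝ≥0∞) • μ) := eLpNorm_mono_measure F hc
    _ = (c : ℝ≥0∞) ^ (1 / p).toReal * eLpNorm F p μ := eLpNorm_smul_measure_of_ne_top hp F _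

theorem ae_integrable_comp_lineShift [SFinite μ] (hm : Measurable (lineShift v))
    (hc : map (lineShift v) (μ.prod ν) ≤ c • μ) (hp1 : 1 ≤ p) (hp : p ≠ ∞) {F : E → ℝ}
    (hF : MemLp F p μ) : ∀ᵐ X ∂μ, Integrable (fun s => F (lineShift v (X, s))) ν := by
  have hFc : MemLp F p (map (lineShift v) (μ.prod ν)) :=
    (hF.smul_measure ENNReal.coe_ne_top).mono_measure hc
  exact (hFc.comp_of_map hm.aemeasurable).integrable_prod_right_ae hp1 hp

theorem lineAverage_sub_ae_eq [SFinite μ] (hm : Measurable (lineShift v))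
    (hc : map (lineShift v) (μ.prod ν) ≤ c • μ) (hp1 : 1 ≤ p) (hp : p ≠ ∞) {F G : E → ℝ}
    (hF : MemLp F p μ) (hG : MemLp G p μ) :
    lineAverage v ν F - lineAverage v ν G =ᵐ[μ] lineAverage v ν (F - G) := by
  filter_upwards [ae_integrable_comp_lineShift hm hc hp1 hp hF,
    ae_integrable_comp_lineShift hm hc hp1 hp hG] with X hFX hGX
  exact (integral_sub hFX hGX).symm

end Pushforward

theorem map_lineShift_prod_le [FiniteDimensional ℝ E] [MeasurableSpace E] [BorelSpace E]
    (μ : Measure E) [μ.IsAddHaarMeasure] {ν : Measure ℝ} [IsZeroOrProbabilityMeasure ν]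
    {v : E → E} {K T : ℝ≥0} (hv : LipschitzWith K v) (hTK : T * K < 1)
    (hν : ∀ᵐ s ∂ν, ‖s‖₊ ≤ T) :
    map (lineShift v) (μ.prod ν) ≤ (((1 - T * K)⁻¹ ^ Module.finrank ℝ E : ℝ≥0) : ℝ≥0∞) • μ := by
  have hm : Measurable (lineShift v) := (continuous_lineShift hv.continuous).measurable
  set C : ℝ≥0 := (1 - T * K)⁻¹ ^ Module.finrank ℝ E
  refine (Measure.map_prod_le_smul (c := C) (τ := μ) hm
    (hν.mono fun s hs => Measure.le_iff.2 fun A hA => ?_)).trans ?_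
  · rw [map_apply (by fun_prop) hA, Measure.smul_apply, smul_eq_mul, ENNReal.coe_pow]
    exact (antilipschitzWith_lineShift hv hTK hs).addHaar_preimage_le μ A
  · gcongr
    exact mul_le_of_le_one_right' prob_le_one

theorem map_lineShift_prod_cond_Ioc_le [FiniteDimensional ℝ E] [MeasurableSpace E] [BorelSpace E]
    (μ : Measure E) [μ.IsAddHaarMeasure] {v : E → E} {K T : ℝ≥0} (hv : LipschitzWith K v)
    (hTK : T * K < 1) {t : ℝ} (ht : t ≤ T) :
    map (lineShift v) (μ.prod volume[|Ioc (-t) t]) ≤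
      (((1 - T * K)⁻¹ ^ Module.finrank ℝ E : ℝ≥0) : ℝ≥0∞) • μ :=
  map_lineShift_prod_le μ hv hTK <| (ae_cond_Ioc_abs_le t).mono fun s hs => by
    rw [← NNReal.coe_le_coe, coe_nnnorm, Real.norm_eq_abs]
    exact hs.trans ht

theorem lineAverage_cond_Ioc {v : E → E} {t : ℝ} (ht : 0 < t) (F : E → ℝ) (X : E) :
    lineAverage v volume[|Ioc (-t) t] F X = 1 / (2 * t) * ∫ s in (-t)..t, F (X + s • v X) := by
  rw [lineAverage, integral_cond_Ioc (by linarith)]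
  congr 1
  ring

theorem dist_lineShift_le {v : E → E} (hv : ∀ X, ‖v X‖ ≤ 1) (X : E) (s : ℝ) :
    dist (lineShift v (X, s)) X ≤ |s| := by
  rw [dist_eq_norm, lineShift, add_sub_cancel_left, norm_smul, Real.norm_eq_abs]
  exact mul_le_of_le_one_right (abs_nonneg s) (hv X)

theorem tendsto_eLpNorm_lineAverage_sub_self [MeasurableSpace E] [BorelSpace E] [ProperSpace E]
    (μ : Measure E) [IsFiniteMeasureOnCompacts μ] {v : E → E} (hv : ∀ X, ‖v X‖ ≤ 1)
    {g : E → ℝ} (hg : Continuous g) (hgs : HasCompactSupport g) (p : ℝ≥0∞) :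
    Tendsto (fun t => eLpNorm (lineAverage v (volume[|Ioc (-t) t]) g - g) p μ) (𝓝[>] 0)
      (𝓝 0) := by
  refine tendsto_eLpNorm_of_forall_abs_le_of_support_subset (s := Metric.cthickening 1 (tsupport g))
    hgs.isCompact.cthickening.measure_lt_top.ne p ?_ fun ε hε => ?_
  · filter_upwards [Ioo_mem_nhdsGT one_pos] with t ht X hX
    have hzero : ∀ s, |s| ≤ t → g (lineShift v (X, s)) = 0 := fun s hs =>
      image_eq_zero_of_notMem_tsupport fun hmem => hX <| Metric.mem_cthickening_of_dist_le _ _ _ _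
        hmem (by rw [dist_comm]; linarith [dist_lineShift_le hv X s, ht.2])
    have hgX : g X = 0 :=
      image_eq_zero_of_notMem_tsupport fun hmem => hX (Metric.self_subset_cthickening _ hmem)
    rw [Pi.sub_apply, lineAverage, hgX, sub_zero]
    exact integral_eq_zero_of_ae ((ae_cond_Ioc_abs_le t).mono hzero)
  · obtain ⟨δ, hδ, hgδ⟩ :=
      Metric.uniformContinuous_iff.1 (hgs.uniformContinuous_of_continuous hg) ε hε
    filter_upwards [Ioo_mem_nhdsGT hδ] with t ht X
    have := isProbabilityMeasure_cond_Ioc ht.1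
    rw [Pi.sub_apply, lineAverage, ← Real.norm_eq_abs]
    refine norm_integral_sub_le_of_ae_norm_sub_le ?_ ((ae_cond_Ioc_abs_le t).mono fun s hs => ?_)
    · have hline : Continuous fun s : ℝ => lineShift v (X, s) := by
        simp only [lineShift]; fun_prop
      exact (hg.comp hline).aestronglyMeasurable
    · exact (hgδ ((dist_lineShift_le hv X s).trans_lt (hs.trans_lt ht.2))).le

end LineAverage

theorem zygmund_Lp_norm_convergence_general
    (v : EuclideanSpace ℝ (Fin 2) → EuclideanSpace ℝ (Fin 2)) (K T : ℝ)
    (hK : 0 < K) (hlip : ∀ X Y, ‖v X - v Y‖ ≤ K * ‖X - Y‖)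
    (hunit : ∀ X, ‖v X‖ = 1) (hT : T < 1 / K)
    (p : ℝ) (hp : 1 ≤ p)
    (F : EuclideanSpace ℝ (Fin 2) → ℝ) (hF : MemLp F (ENNReal.ofReal p) volume) :
    Tendsto
      (fun t : ℝ => eLpNorm
        (fun X => ((1 / (2 * t)) * ∫ s in (-t)..t, F (X + s • v X)) - F X)
        (ENNReal.ofReal p) volume)
      (nhdsWithin 0 (Set.Ioo 0 T)) (nhds 0) := by
  have hv : LipschitzWith K.toNNReal v := .of_dist_le_mul fun X Y => by
    simpa [dist_eq_norm, Real.coe_toNNReal K hK.le] using hlip X Y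
  have hTK : T.toNNReal * K.toNNReal < 1 := by
    rw [mul_comm, ← Real.toNNReal_mul hK.le, Real.toNNReal_lt_one, mul_comm]
    exact (lt_div_iff₀ hK).1 (by simpa using hT)
  have hm := (continuous_lineShift hv.continuous).measurable
  have hmap (t : ℝ) (ht : t ∈ Ioo 0 T) :=
    map_lineShift_prod_cond_Ioc_le volume hv hTK (ht.2.le.trans (Real.le_coe_toNNReal T))
  have hp1 : 1 ≤ ENNReal.ofReal p := ENNReal.one_le_ofReal.2 hp
  have hlim := hF.tendsto_eLpNorm_sub_self_of_uniformly_bounded hp1 ENNReal.ofReal_ne_top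
    (A := fun t => lineAverage v volume[|Ioc (-t) t]) (ENNReal.rpow_ne_top_of_nonneg
      (by positivity) ENNReal.coe_ne_top)
    (eventually_nhdsWithin_of_forall fun t ht F hF =>
      aestronglyMeasurable_lineAverage hm (hmap t ht) hF.1)
    (eventually_nhdsWithin_of_forall fun t ht F hF =>
      eLpNorm_lineAverage_le hm (hmap t ht) hp1 ENNReal.ofReal_ne_top hF.1)
    (eventually_nhdsWithin_of_forall fun t ht F G hF hG =>
      lineAverage_sub_ae_eq hm (hmap t ht) hp1 ENNReal.ofReal_ne_top hF hG)
    fun g hg hgs => (tendsto_eLpNorm_lineAverage_sub_self volume (fun X => (hunit X).le) hg hgs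
      _).mono_left (nhdsWithin_mono _ Ioo_subset_Ioi_self)
  refine hlim.congr' (eventually_nhdsWithin_of_forall fun t ht => ?_)
  congr 1
  ext X
  rw [Pi.sub_apply, lineAverage_cond_Ioc ht.1]

theorem zygmund_Lp_norm_convergence
    (v : EuclideanSpace ℝ (Fin 2) → EuclideanSpace ℝ (Fin 2)) (K T : ℝ)
    (hK : 0 < K) (hlip : ∀ X Y, ‖v X - v Y‖ ≤ K * ‖X - Y‖)
    (hunit : ∀ X, ‖v X‖ = 1) (hT0 : 0 < T) (hT : T < 1 / K)
    (p : ℝ) (hp : 1 ≤ p)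
    (F : EuclideanSpace ℝ (Fin 2) → ℝ) (hF : MemLp F (ENNReal.ofReal p) volume) :
    Tendsto
      (fun t : ℝ => eLpNorm
        (fun X => ((1 / (2 * t)) * ∫ s in (-t)..t, F (X + s • v X)) - F X)
        (ENNReal.ofReal p) volume)
      (nhdsWithin 0 (Set.Ioo 0 T)) (nhds 0) :=
  zygmund_Lp_norm_convergence_general v K T hK hlip hunit hT p hp F hF
end

section
/- Let v : ℝ² → ℝ² be a unit Lipschitz vector field with constant K and 0 < T < 1/K. Then for every F ∈ L¹(ℝ²) and every λ > 0: (1/T)∫_{−T/2}^{T/2} μ{(x,y) ∈ ℝ² : sup_{0<t≤T/2} (1/(2t))∫_{−t}^{t} |F[(x,y) + β·v(S_s^{−1}(x,y))]| dβ > λ} ds ≤ (4π²(1+TK)²/(1−TK)²)·(1/λ)·∫_{ℝ²} |F| dμ. -/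
/-!
Substituting `X = S_s Y` with `S_s Y = Y + s • v Y` turns the average of `|F|` along the line
through `X` in direction `v (S_s⁻¹ X)` into the average of `|F (Y + u • v Y)|` over
`u ∈ (s - t, s + t)`. For fixed `Y`, the set of `s` where this exceeds `Λ` is a superlevel set of
the one-dimensional maximal function of `u ↦ |F (Y + u • v Y)|`, so by the Vitali covering lemma
its length is at most `4 / Λ` times the integral of `|F|` over the segment
`{Y + u • v Y : |u| ≤ T}`.
Integrating over `Y` (Fubini), and comparing volumes through `S_s` and `S_u`, which are
`(1 + T K)`-Lipschitz and `(1 - T K)⁻¹`-antilipschitz, yields the bound with constant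
`8 (1 + T K)² / (1 - T K)² ≤ 4 π² (1 + T K)² / (1 - T K)²`.
-/

open MeasureTheory Real Metric Set Function Filter
open scoped ENNReal NNReal

section FlowMap

variable {E : Type*} [NormedAddCommGroup E] [NormedSpace ℝ E] {v : E → E} {K c : ℝ≥0} {s : ℝ}

theorem lipschitzWith_const_smul_comp (hv : LipschitzWith K v) (hs : ‖s‖₊ * K ≤ c) :
    LipschitzWith c (fun x => s • v x) :=
  ((lipschitzWith_smul s).comp hv).weaken hs

theorem lipschitzWith_add_smul (hv : LipschitzWith K v) (hs : ‖s‖₊ * K ≤ c) :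
    LipschitzWith (1 + c) (fun x => x + s • v x) :=
  LipschitzWith.id.add (lipschitzWith_const_smul_comp hv hs)

theorem antilipschitzWith_add_smul (hv : LipschitzWith K v) (hs : ‖s‖₊ * K ≤ c) (hc : c < 1) :
    AntilipschitzWith (1 - c)⁻¹ (fun x => x + s • v x) := by
  simpa using
    AntilipschitzWith.id.add_lipschitzWith (lipschitzWith_const_smul_comp hv hs) (by simpa)

theorem surjective_add_smul [CompleteSpace E] (hv : LipschitzWith K v) (hs : ‖s‖₊ * K < 1) :
    Surjective (fun x => x + s • v x) := by
  have happrox : ApproximatesLinearOn (fun x => x + s • v x)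
      ((ContinuousLinearEquiv.refl ℝ E : E ≃L[ℝ] E) : E →L[ℝ] E) univ (‖s‖₊ * K) := by
    intro x _ y _
    simpa [dist_eq_norm, ← smul_sub, add_sub_add_comm] using
      ((lipschitzWith_smul s).comp hv).dist_le_mul x y
  refine happrox.surjective ?_
  rcases subsingleton_or_nontrivial E with hE | hE
  · exact Or.inl hE
  · right; simpa using hs

end FlowMap

section LipschitzVolume

variable {V : Type*} [NormedAddCommGroup V] [InnerProductSpace ℝ V] [FiniteDimensional ℝ V]
  [MeasurableSpace V] [BorelSpace V] {f : V → V} {L : ℝ≥0}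

theorem LipschitzWith.volume_image_le (hf : LipschitzWith L f) (A : Set V) :
    volume (f '' A) ≤ L ^ Module.finrank ℝ V * volume A := by
  rw [← InnerProductSpace.euclideanHausdorffMeasure_eq_volume,
    Measure.euclideanHausdorffMeasure_def]
  simp only [Measure.smul_apply, mul_smul_comm]
  gcongr
  simpa using hf.hausdorffMeasure_image_le (Nat.cast_nonneg _) A

theorem AntilipschitzWith.volume_preimage_le (hf : AntilipschitzWith L f) (A : Set V) :
    volume (f ⁻¹' A) ≤ L ^ Module.finrank ℝ V * volume A := by
  rw [← InnerProductSpace.euclideanHausdorffMeasure_eq_volume,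
    Measure.euclideanHausdorffMeasure_def]
  simp only [Measure.smul_apply, mul_smul_comm]
  gcongr
  simpa using hf.hausdorffMeasure_preimage_le (Nat.cast_nonneg _) A

theorem AntilipschitzWith.lintegral_comp_le (hf : AntilipschitzWith L f) (hfm : Measurable f)
    {g : V → ℝ≥0∞} (hg : Measurable g) :
    ∫⁻ x, g (f x) ≤ L ^ Module.finrank ℝ V * ∫⁻ x, g x := by
  have hmap : volume.map f ≤ (L ^ Module.finrank ℝ V : ℝ≥0∞) • volume :=
    Measure.le_iff.2 fun A hA => by
      simpa [Measure.map_apply hfm hA] using hf.volume_preimage_le A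
  calc ∫⁻ x, g (f x) = ∫⁻ x, g x ∂volume.map f := (lintegral_map hg hfm).symm
    _ ≤ ∫⁻ x, g x ∂((L ^ Module.finrank ℝ V : ℝ≥0∞) • volume) := lintegral_mono' hmap le_rfl
    _ = _ := lintegral_smul_measure _ _

end LipschitzVolume

theorem exists_rat_lt_measure_ball {X : Type*} [PseudoMetricSpace X] [MeasurableSpace X]
    (ν : Measure X) {x : X} {t : ℝ} {a : ℝ≥0∞} (h : a < ν (ball x t)) :
    ∃ q : ℚ, 0 < (q : ℝ) ∧ (q : ℝ) < t ∧ a < ν (ball x q) := by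
  have ht : 0 < t := by
    by_contra! ht
    simp [ball_eq_empty.2 ht] at h
  obtain ⟨u, hu_mono, hu_mem, hu_lim⟩ := exists_seq_strictMono_tendsto' ht
  have hball : ball x t = ⋃ n, ball x (u n) := by
    ext y
    simp only [mem_ball, mem_iUnion]
    exact ⟨fun hy => (hu_lim.eventually (lt_mem_nhds hy)).exists,
      fun ⟨n, hn⟩ => hn.trans (hu_mem n).2⟩
  have hmono : Monotone fun n => ball x (u n) := fun m n hmn =>
    ball_subset_ball (hu_mono.monotone hmn)
  rw [hball, hmono.measure_iUnion, lt_iSup_iff] at h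
  obtain ⟨n, hn⟩ := h
  obtain ⟨q, huq, hqt⟩ := exists_rat_btwn (hu_mem n).2
  exact ⟨q, (hu_mem n).1.trans huq, hqt, hn.trans_le (measure_mono (ball_subset_ball huq.le))⟩

/-- `ν (ball s t) / (2 t)` is the average of `ν` over the interval of radius `t` centred at `s`, so
this is the superlevel set `{M ν > Λ}` of the centred maximal function of `ν` with radii `≤ R`. -/
def maximalSuperlevel (ν : Measure ℝ) (R Λ : ℝ) : Set ℝ :=
  {s | ∃ t ∈ Ioc 0 R, ENNReal.ofReal (2 * t * Λ) < ν (ball s t)}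

theorem maximalSuperlevel_eq_iUnion_rat (ν : Measure ℝ) (R : ℝ) {Λ : ℝ} (hΛ : 0 ≤ Λ) :
    maximalSuperlevel ν R Λ =
      ⋃ q : ℚ, ⋃ (_ : (q : ℝ) ∈ Ioc 0 R), {s | ENNReal.ofReal (2 * q * Λ) < ν (ball s q)} := by
  ext s
  simp only [maximalSuperlevel, mem_ofPred_eq, mem_iUnion, exists_prop]
  constructor
  · rintro ⟨t, ⟨ht0, htR⟩, hlt⟩
    obtain ⟨q, hq0, hqt, hq⟩ := exists_rat_lt_measure_ball ν hlt
    refine ⟨q, ⟨hq0, hqt.le.trans htR⟩, lt_of_le_of_lt ?_ hq⟩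
    gcongr
  · rintro ⟨q, hq, hlt⟩
    exact ⟨q, hq, hlt⟩

theorem volume_maximalSuperlevel_inter_mul_le (ν : Measure ℝ) (R Λ : ℝ) (U : Set ℝ) :
    volume (maximalSuperlevel ν R Λ ∩ U) * ENNReal.ofReal Λ ≤ 4 * ν (thickening R U) := by
  set t := maximalSuperlevel ν R Λ ∩ U
  have hr : ∀ s ∈ t, ∃ r ∈ Ioc 0 R, ENNReal.ofReal (2 * r * Λ) < ν (ball s r) := fun s hs => hs.1
  choose! r hr_mem hr_lt using hr
  obtain ⟨u, hut, hdisj, hcover⟩ :=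
    Vitali.exists_disjoint_subfamily_covering_enlargement_closedBall t id r R
      (fun s hs => (hr_mem s hs).2) 4 (by norm_num)
  have hdisj_ball : u.PairwiseDisjoint fun b => ball b (r b) :=
    hdisj.mono fun b => ball_subset_closedBall
  have hu : u.Countable := hdisj_ball.countable_of_isOpen (fun _ _ => isOpen_ball)
    fun b hb => nonempty_ball.2 (hr_mem b (hut hb)).1
  have hvol : ∀ b ∈ u,
      volume (closedBall b (4 * r b)) * ENNReal.ofReal Λ ≤ 4 * ν (ball b (r b)) := by
    intro b hb
    have hrb := (hr_mem b (hut hb)).1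
    rw [Real.volume_closedBall, ← ENNReal.ofReal_mul (by positivity),
      show 2 * (4 * r b) * Λ = 4 * (2 * r b * Λ) by ring, ENNReal.ofReal_mul (by norm_num)]
    simpa using mul_le_mul_right (hr_lt b (hut hb)).le 4
  calc volume t * ENNReal.ofReal Λ
      ≤ (∑' b : u, volume (closedBall (b : ℝ) (4 * r b))) * ENNReal.ofReal Λ := by
        gcongr
        refine (measure_mono fun s hs => ?_).trans
          (measure_biUnion_le volume hu fun b => closedBall b (4 * r b))
        obtain ⟨b, hb, hsub⟩ := hcover s hs
        exact mem_biUnion hb (hsub (mem_closedBall_self (hr_mem s hs).1.le))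
    _ ≤ ∑' b : u, 4 * ν (ball (b : ℝ) (r b)) := by
        rw [← ENNReal.tsum_mul_right]
        exact ENNReal.tsum_le_tsum fun b => hvol b b.2
    _ = 4 * ν (⋃ b ∈ u, ball b (r b)) := by
        rw [ENNReal.tsum_mul_left, measure_biUnion hu hdisj_ball fun _ _ => measurableSet_ball]
    _ ≤ 4 * ν (thickening R U) := by
        refine mul_le_mul_right (measure_mono (iUnion₂_subset fun b hb y hy => ?_)) 4
        exact mem_thickening_iff.2 ⟨b, (hut hb).2, (mem_ball.1 hy).trans_le (hr_mem b (hut hb)).2⟩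

theorem AEMeasurable.exists_measurable_ge_ae_eq {α : Type*} [MeasurableSpace α] {μ : Measure α}
    {f : α → ℝ≥0∞} (hf : AEMeasurable f μ) : ∃ g, Measurable g ∧ f ≤ g ∧ g =ᵐ[μ] f := by
  classical
  obtain ⟨N, hfN, hN, hμN⟩ := exists_measurable_superset_of_null hf.ae_eq_mk
  refine ⟨N.piecewise (fun _ => ∞) (hf.mk f), measurable_const.piecewise hN hf.measurable_mk,
    fun x => ?_, ?_⟩
  · by_cases hx : x ∈ N
    · simp [hx]
    · simpa [hx] using (not_not.1 fun h => hx (hfN h)).le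
  · filter_upwards [hf.ae_eq_mk, measure_eq_zero_iff_ae_notMem.1 hμN] with x hx hxN
    simp [hxN, hx]

theorem intervalIntegral_toReal_le_toReal_lintegral {a b : ℝ} (hab : a ≤ b) {f : ℝ → ℝ≥0∞}
    (hf : ∫⁻ s in Ioc a b, f s ≠ ∞) :
    ∫ s in a..b, (f s).toReal ≤ (∫⁻ s in Ioc a b, f s).toReal := by
  rw [intervalIntegral.integral_of_le hab]
  refine (Real.le_norm_self _).trans ((norm_integral_le_lintegral_norm _).trans
    (ENNReal.toReal_mono hf (lintegral_mono fun s => ?_)))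
  simpa using ENNReal.ofReal_toReal_le

noncomputable def lineMeasure {V : Type*} [AddCommGroup V] [Module ℝ V] (v : V → V)
    (G : V → ℝ≥0∞) (Y : V) : Measure ℝ :=
  volume.withDensity fun u => G (Y + u • v Y)

theorem setOf_lt_average_subset_image {V : Type*} [NormedAddCommGroup V] [NormedSpace ℝ V]
    {v : V → V} {G : V → ℝ≥0∞} {F : V → ℝ} (hFG : ∀ X, ‖F X‖ₑ ≤ G X) {s : ℝ}
    (hS : Surjective fun Y => Y + s • v Y) (R : ℝ) {Λ : ℝ} (hΛ : 0 ≤ Λ) :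
    {X | ∃ t ∈ Ioc (0 : ℝ) R,
        (1 / (2 * t)) * ∫ β in (-t)..t, |F (X + β • v (invFun (fun Y => Y + s • v Y) X))| > Λ} ⊆
      (fun Y => Y + s • v Y) '' {Y | s ∈ maximalSuperlevel (lineMeasure v G Y) R Λ} := by
  rintro X ⟨t, ht, hgt⟩
  set Y := invFun (fun Y => Y + s • v Y) X
  have hYX : Y + s • v Y = X := invFun_eq (hS X)
  refine ⟨Y, ⟨t, ht, ?_⟩, hYX⟩
  have hline : ∀ β : ℝ, X + β • v Y = Y + (s + β) • v Y := fun β => by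
    rw [← hYX, add_smul, add_assoc]
  have hint : ∫ β in (-t)..t, |F (X + β • v Y)| = ∫ u in ball s t, |F (Y + u • v Y)| := by
    simp_rw [hline]
    rw [intervalIntegral.integral_comp_add_left (fun u => |F (Y + u • v Y)|),
      intervalIntegral.integral_of_le (by linarith [ht.1]), integral_Ioc_eq_integral_Ioo,
      Real.ball_eq_Ioo, sub_eq_add_neg]
  have hlt : 2 * t * Λ < ∫ u in ball s t, |F (Y + u • v Y)| := by
    rw [gt_iff_lt, one_div, inv_mul_eq_div, lt_div_iff₀ (by linarith [ht.1]), hint] at hgt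
    linarith
  calc ENNReal.ofReal (2 * t * Λ)
      < ENNReal.ofReal (∫ u in ball s t, |F (Y + u • v Y)|) :=
        (ENNReal.ofReal_lt_ofReal_iff_of_nonneg (by have := ht.1; positivity)).2 hlt
    _ = ‖∫ u in ball s t, |F (Y + u • v Y)|‖ₑ :=
        (Real.enorm_eq_ofReal (integral_nonneg fun _ => abs_nonneg _)).symm
    _ ≤ ∫⁻ u in ball s t, ‖|F (Y + u • v Y)|‖ₑ := enorm_integral_le_lintegral_enorm _
    _ ≤ ∫⁻ u in ball s t, G (Y + u • v Y) := lintegral_mono fun u => by simpa using hFG _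
    _ = lineMeasure v G Y (ball s t) := (withDensity_apply _ measurableSet_ball).symm

section LineMeasure

variable {V : Type*} [NormedAddCommGroup V] [InnerProductSpace ℝ V] [FiniteDimensional ℝ V]
  [MeasurableSpace V] [BorelSpace V] {v : V → V} {G : V → ℝ≥0∞}

theorem measurable_lineMeasure_ball (hv : Measurable v) (hG : Measurable G) (r : ℝ) :
    Measurable fun p : ℝ × V => lineMeasure v G p.2 (ball p.1 r) := by
  have hball : MeasurableSet {x : (ℝ × V) × ℝ | x.2 ∈ ball x.1.1 r} :=
    measurableSet_lt (measurable_snd.dist measurable_fst.fst) measurable_const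
  have hline : Measurable fun x : (ℝ × V) × ℝ => G (x.1.2 + x.2 • v x.1.2) :=
    hG.comp (measurable_fst.snd.add (measurable_snd.smul (hv.comp measurable_fst.snd)))
  simp only [lineMeasure, withDensity_apply _ measurableSet_ball,
    ← lintegral_indicator measurableSet_ball]
  exact (hline.indicator hball).lintegral_prod_right'

theorem measurableSet_maximalSuperlevel_lineMeasure (hv : Measurable v) (hG : Measurable G)
    (R : ℝ) {Λ : ℝ} (hΛ : 0 ≤ Λ) :
    MeasurableSet {p : ℝ × V | p.1 ∈ maximalSuperlevel (lineMeasure v G p.2) R Λ} := by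
  simp only [maximalSuperlevel_eq_iUnion_rat _ R hΛ, mem_iUnion, mem_ofPred_eq, ofPred_exists]
  exact .iUnion fun q => .iUnion fun _ =>
    measurableSet_lt measurable_const (measurable_lineMeasure_ball hv hG q)

theorem lintegral_volume_maximalSuperlevel_lineMeasure_le (hv : Measurable v) (hG : Measurable G)
    (T : ℝ) {Λ : ℝ} (hΛ : 0 ≤ Λ) :
    (∫⁻ s in Ioc (-(T / 2)) (T / 2),
        volume {Y | s ∈ maximalSuperlevel (lineMeasure v G Y) (T / 2) Λ}) * ENNReal.ofReal Λ ≤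
      4 * ∫⁻ Y, lineMeasure v G Y (Icc (-T) T) := by
  set A := {p : ℝ × V | p.1 ∈ maximalSuperlevel (lineMeasure v G p.2) (T / 2) Λ}
  have hA : MeasurableSet A := measurableSet_maximalSuperlevel_lineMeasure hv hG _ hΛ
  have hthick : thickening (T / 2) (Ioc (-(T / 2)) (T / 2)) ⊆ Icc (-T) T := by
    intro x hx
    obtain ⟨y, ⟨hy₁, hy₂⟩, hxy⟩ := mem_thickening_iff.1 hx
    rw [Real.dist_eq, abs_lt] at hxy
    constructor <;> linarith
  calc (∫⁻ s in Ioc (-(T / 2)) (T / 2), volume (Prod.mk s ⁻¹' A)) * ENNReal.ofReal Λ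
      = ∫⁻ Y, volume (maximalSuperlevel (lineMeasure v G Y) (T / 2) Λ ∩ Ioc (-(T / 2)) (T / 2))
          * ENNReal.ofReal Λ := by
        rw [← Measure.prod_apply hA, Measure.prod_apply_symm hA,
          ← lintegral_mul_const' _ _ ENNReal.ofReal_ne_top]
        congr! 2 with Y
        rw [Measure.restrict_apply (measurable_prodMk_right hA)]
        rfl
    _ ≤ ∫⁻ Y, 4 * lineMeasure v G Y (Icc (-T) T) := lintegral_mono fun Y =>
        (volume_maximalSuperlevel_inter_mul_le _ _ _ _).trans (by gcongr)
    _ = 4 * ∫⁻ Y, lineMeasure v G Y (Icc (-T) T) := lintegral_const_mul' _ _ (by norm_num)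

theorem lintegral_lineMeasure_le {L : ℝ≥0} (hv : Measurable v) (hG : Measurable G) {J : Set ℝ}
    (hJ : MeasurableSet J) (hS : ∀ u ∈ J, AntilipschitzWith L fun Y => Y + u • v Y) :
    ∫⁻ Y, lineMeasure v G Y J ≤ L ^ Module.finrank ℝ V * volume J * ∫⁻ X, G X := by
  have hline : Measurable fun p : V × ℝ => G (p.1 + p.2 • v p.1) :=
    hG.comp (measurable_fst.add (measurable_snd.smul (hv.comp measurable_fst)))
  calc ∫⁻ Y, lineMeasure v G Y J = ∫⁻ Y, ∫⁻ u in J, G (Y + u • v Y) := by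
        simp only [lineMeasure, withDensity_apply _ hJ]
    _ = ∫⁻ u in J, ∫⁻ Y, G (Y + u • v Y) := lintegral_lintegral_swap hline.aemeasurable
    _ ≤ ∫⁻ _ in J, L ^ Module.finrank ℝ V * ∫⁻ X, G X := setLIntegral_mono' hJ fun u hu =>
        (hS u hu).lintegral_comp_le (measurable_id.add (hv.const_smul u)) hG
    _ = _ := by rw [setLIntegral_const, mul_right_comm]

theorem lintegral_volume_setOf_lt_average_le {K c : ℝ≥0} {T Λ : ℝ} {F : V → ℝ}
    (hv : LipschitzWith K v) (hG : Measurable G) (hFG : ∀ X, ‖F X‖ₑ ≤ G X) (hTK : T * K ≤ c)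
    (hc : c < 1) (hΛ : 0 ≤ Λ) :
    (∫⁻ s in Ioc (-(T / 2)) (T / 2), volume {X | ∃ t ∈ Ioc (0 : ℝ) (T / 2),
        (1 / (2 * t)) * ∫ β in (-t)..t, |F (X + β • v (invFun (fun Y => Y + s • v Y) X))| > Λ})
        * ENNReal.ofReal Λ ≤
      4 * ((1 + c : ℝ≥0) : ℝ≥0∞) ^ Module.finrank ℝ V * ((1 - c)⁻¹ : ℝ≥0) ^ Module.finrank ℝ V *
        ENNReal.ofReal (2 * T) * ∫⁻ X, G X := by
  set d := Module.finrank ℝ V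
  have hsK : ∀ s ∈ Icc (-T) T, ‖s‖₊ * K ≤ c := fun s hs => by
    rw [← NNReal.coe_le_coe, NNReal.coe_mul, coe_nnnorm, Real.norm_eq_abs]
    exact (mul_le_mul_of_nonneg_right (abs_le.2 hs) K.2).trans hTK
  have hwin : Ioc (-(T / 2)) (T / 2) ⊆ Icc (-T) T := fun s hs => by
    constructor <;> linarith [hs.1, hs.2]
  calc _ ≤ (∫⁻ s in Ioc (-(T / 2)) (T / 2), ((1 + c : ℝ≥0) : ℝ≥0∞) ^ d *
          volume {Y | s ∈ maximalSuperlevel (lineMeasure v G Y) (T / 2) Λ}) * ENNReal.ofReal Λ := by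
        gcongr ?_ * _
        refine setLIntegral_mono' measurableSet_Ioc fun s hs => ?_
        have hsK' := hsK s (hwin hs)
        grw [setOf_lt_average_subset_image hFG (surjective_add_smul hv (hsK'.trans_lt hc)) _ hΛ]
        exact (lipschitzWith_add_smul hv hsK').volume_image_le _
    _ = ((1 + c : ℝ≥0) : ℝ≥0∞) ^ d * ((∫⁻ s in Ioc (-(T / 2)) (T / 2),
          volume {Y | s ∈ maximalSuperlevel (lineMeasure v G Y) (T / 2) Λ}) *
            ENNReal.ofReal Λ) := by
        rw [lintegral_const_mul' _ _ (by simp), mul_assoc]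
    _ ≤ ((1 + c : ℝ≥0) : ℝ≥0∞) ^ d * (4 * ∫⁻ Y, lineMeasure v G Y (Icc (-T) T)) :=
        mul_le_mul_right
          (lintegral_volume_maximalSuperlevel_lineMeasure_le hv.continuous.measurable hG T hΛ) _
    _ ≤ ((1 + c : ℝ≥0) : ℝ≥0∞) ^ d *
          (4 * (((1 - c)⁻¹ : ℝ≥0) ^ d * volume (Icc (-T) T) * ∫⁻ X, G X)) := by
        gcongr
        exact lintegral_lineMeasure_le hv.continuous.measurable hG measurableSet_Icc
          fun u hu => antilipschitzWith_add_smul hv (hsK u hu) hc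
    _ = _ := by
        rw [Real.volume_Icc, sub_neg_eq_add, ← two_mul]
        ring

theorem intervalIntegral_volume_setOf_lt_average_le {K : ℝ≥0} {T Λ : ℝ} {F : V → ℝ}
    (hv : LipschitzWith K v) (hT : 0 ≤ T) (hTK : T * K < 1) (hF : Integrable F) (hΛ : 0 < Λ) :
    ∫ s in (-(T / 2))..(T / 2), (volume {X | ∃ t ∈ Ioc (0 : ℝ) (T / 2),
        (1 / (2 * t)) * ∫ β in (-t)..t,
          |F (X + β • v (invFun (fun Y => Y + s • v Y) X))| > Λ}).toReal
      ≤ 8 * T * (1 + T * K) ^ Module.finrank ℝ V / (1 - T * K) ^ Module.finrank ℝ V / Λ *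
        ∫ X, |F X| := by
  set d := Module.finrank ℝ V
  have hc0 : 0 ≤ T * K := mul_nonneg hT K.2
  set c := (T * K).toNNReal
  have hc : c < 1 := by rwa [← NNReal.coe_lt_coe, Real.coe_toNNReal _ hc0]
  -- The maximal sets see `F` on lines, all of which may lie in a null set where `F` is wild, so we
  -- work with a measurable majorant of `‖F‖ₑ` that holds everywhere.
  obtain ⟨G, hG, hFG, hGF⟩ := hF.aemeasurable.enorm.exists_measurable_ge_ae_eq
  have hGint : ∫⁻ X, G X = ENNReal.ofReal (∫ X, |F X|) := by
    rw [lintegral_congr_ae hGF, ← ofReal_integral_norm_eq_lintegral_enorm hF]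
    rfl
  have hbound := lintegral_volume_setOf_lt_average_le hv hG hFG
    (Real.le_coe_toNNReal _) hc hΛ.le
  rw [hGint] at hbound
  set I := ∫⁻ s in Ioc (-(T / 2)) (T / 2), volume {X | ∃ t ∈ Ioc (0 : ℝ) (T / 2),
        (1 / (2 * t)) * ∫ β in (-t)..t, |F (X + β • v (invFun (fun Y => Y + s • v Y) X))| > Λ}
  set B : ℝ≥0∞ := 4 * ((1 + c : ℝ≥0) : ℝ≥0∞) ^ d * ((1 - c)⁻¹ : ℝ≥0) ^ d *
    ENNReal.ofReal (2 * T) * ENNReal.ofReal (∫ X, |F X|)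
  have hBtop : B ≠ ∞ := by simp [B, ENNReal.mul_eq_top]
  have hBreal : B.toReal = 8 * T * (1 + T * K) ^ d / (1 - T * K) ^ d * ∫ X, |F X| := by
    simp only [B, ENNReal.toReal_mul, ENNReal.toReal_pow, ENNReal.coe_toReal, ENNReal.toReal_ofNat,
      ENNReal.toReal_ofReal (integral_nonneg fun _ => abs_nonneg _),
      ENNReal.toReal_ofReal (by positivity : 0 ≤ 2 * T), NNReal.coe_add, NNReal.coe_one,
      NNReal.coe_inv, NNReal.coe_sub hc.le, c, Real.coe_toNNReal _ hc0, inv_pow]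
    ring
  have hItop : I ≠ ∞ := fun hI => hBtop <| top_le_iff.1 <| by
    simpa [hI, ENNReal.top_mul, hΛ] using hbound
  have hIB : I.toReal * Λ ≤ B.toReal := by
    simpa [ENNReal.toReal_mul, hΛ.le] using ENNReal.toReal_mono hBtop hbound
  calc _ ≤ I.toReal := intervalIntegral_toReal_le_toReal_lintegral (by linarith) hItop
    _ ≤ B.toReal / Λ := by rwa [le_div_iff₀ hΛ]
    _ = _ := by rw [hBreal]; ring

end LineMeasure

theorem zygmund_maximal_inequality_general
    (v : EuclideanSpace ℝ (Fin 2) → EuclideanSpace ℝ (Fin 2)) (K T : ℝ)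
    (hK : 0 < K) (hlip : ∀ X Y, ‖v X - v Y‖ ≤ K * ‖X - Y‖)
    (hT0 : 0 < T) (hT : T < 1 / K)
    (F : EuclideanSpace ℝ (Fin 2) → ℝ) (hF : Integrable F volume)
    (Λ : ℝ) (hΛ : 0 < Λ) :
    (1 / T) * ∫ s in (-(T / 2))..(T / 2),
        (volume {X : EuclideanSpace ℝ (Fin 2) |
          ∃ t ∈ Set.Ioc (0 : ℝ) (T / 2),
            (1 / (2 * t)) * ∫ β in (-t)..t,
              |F (X + β • v (Function.invFun (fun Y => Y + s • v Y) X))| > Λ}).toReal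
      ≤ (4 * π ^ 2 * (1 + T * K) ^ 2 / (1 - T * K) ^ 2) * (1 / Λ) * ∫ X, |F X| := by
  have hv : LipschitzWith K.toNNReal v :=
    LipschitzWith.of_dist_le' fun X Y => by rw [dist_eq_norm, dist_eq_norm]; exact hlip X Y
  have hTK : T * K.toNNReal < 1 := by
    rw [Real.coe_toNNReal _ hK.le]
    exact (lt_div_iff₀ hK).1 hT
  have hmax := intervalIntegral_volume_setOf_lt_average_le hv hT0.le hTK hF hΛ
  rw [finrank_euclideanSpace_fin, Real.coe_toNNReal _ hK.le] at hmax
  calc _ ≤ 1 / T * (8 * T * (1 + T * K) ^ 2 / (1 - T * K) ^ 2 / Λ * ∫ X, |F X|) := by gcongr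
    _ = 8 * (1 + T * K) ^ 2 / (1 - T * K) ^ 2 * (1 / Λ) * ∫ X, |F X| := by field_simp
    _ ≤ _ := by
        gcongr
        nlinarith [pi_gt_three]

theorem zygmund_maximal_inequality
    (v : EuclideanSpace ℝ (Fin 2) → EuclideanSpace ℝ (Fin 2)) (K T : ℝ)
    (hK : 0 < K) (hlip : ∀ X Y, ‖v X - v Y‖ ≤ K * ‖X - Y‖)
    (hunit : ∀ X, ‖v X‖ = 1) (hT0 : 0 < T) (hT : T < 1 / K)
    (F : EuclideanSpace ℝ (Fin 2) → ℝ) (hF : Integrable F volume)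
    (Λ : ℝ) (hΛ : 0 < Λ) :
    (1 / T) * ∫ s in (-(T / 2))..(T / 2),
        (volume {X : EuclideanSpace ℝ (Fin 2) |
          ∃ t ∈ Set.Ioc (0 : ℝ) (T / 2),
            (1 / (2 * t)) * ∫ β in (-t)..t,
              |F (X + β • v (Function.invFun (fun Y => Y + s • v Y) X))| > Λ}).toReal
      ≤ (4 * π ^ 2 * (1 + T * K) ^ 2 / (1 - T * K) ^ 2) * (1 / Λ) * ∫ X, |F X| :=
  zygmund_maximal_inequality_general v K T hK hlip hT0 hT F hF Λ hΛ
end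

section
/- Let w : ℝ² → ℝ² be a unit Lipschitz vector field with constant K and 0 < T < 1/K. Let N ⊆ ℝ² be a measurable set of Lebesgue measure zero. Then for almost every (x,y) ∈ ℝ², for every t ∈ (0, T], the set {β ∈ [−t,t] : (x,y) + β·w(x,y) ∈ N} has one-dimensional Lebesgue measure zero. -/
open MeasureTheory

/-!
For `|β| ≤ T` the map `X ↦ X + β • w X` is a perturbation of the identity by a
`|β| K`-Lipschitz map with `|β| K < 1`, hence antilipschitz. Antilipschitz maps at most
multiply the top-dimensional Hausdorff measure by a constant, and that measure is a Haar
measure, so preimages of Lebesgue-null sets are null. Thus every `β`-slice of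
`{(X, β) : |β| ≤ T, X + β • w X ∈ N}` is null, and by Fubini so is almost every `X`-slice.
-/

theorem LipschitzWith.antilipschitzWith_add_smul {E : Type*} [NormedAddCommGroup E]
    [NormedSpace ℝ E] {w : E → E} {K : NNReal} (hw : LipschitzWith K w) {β : ℝ}
    (hβ : ‖β‖₊ * K < 1) : AntilipschitzWith (1 - ‖β‖₊ * K)⁻¹ fun X => X + β • w X := by
  simpa using
    AntilipschitzWith.id.add_lipschitzWith ((lipschitzWith_smul β).comp hw) (by simpa using hβ)

theorem AntilipschitzWith.measure_preimage_null {E : Type*} [NormedAddCommGroup E]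
    [NormedSpace ℝ E] [FiniteDimensional ℝ E] [MeasurableSpace E] [BorelSpace E]
    (μ : Measure E) [μ.IsAddHaarMeasure] {f : E → E} {K : NNReal} (hf : AntilipschitzWith K f)
    {s : Set E} (hs : μ s = 0) : μ (f ⁻¹' s) = 0 := by
  set d := Module.finrank ℝ E
  have hs' : μH[d] s = 0 := Measure.absolutelyContinuous_isAddHaarMeasure _ μ hs
  refine Measure.absolutelyContinuous_isAddHaarMeasure μ μH[d] (nonpos_iff_eq_zero.1 ?_)
  simpa [hs'] using hf.hausdorffMeasure_preimage_le d.cast_nonneg s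

theorem MeasureTheory.Measure.ae_measure_setOf_eq_zero_of_ae {α β : Type*} [MeasurableSpace α]
    [MeasurableSpace β] {μ : Measure α} {ν : Measure β} [SFinite μ] [SFinite ν]
    {p : α → β → Prop} (hp : MeasurableSet {x : α × β | p x.1 x.2})
    (h : ∀ᵐ y ∂ν, μ {x | p x y} = 0) : ∀ᵐ x ∂μ, ν {y | p x y} = 0 := by
  simp only [measure_eq_zero_iff_ae_notMem, Set.mem_ofPred_eq] at h ⊢
  exact (ae_ae_comm hp.compl).2 h

theorem zygmund_null_set_along_segments_general
    (w : EuclideanSpace ℝ (Fin 2) → EuclideanSpace ℝ (Fin 2)) (K T : ℝ)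
    (hK : 0 < K) (hlip : ∀ X Y, ‖w X - w Y‖ ≤ K * ‖X - Y‖)
    (hT : T < 1 / K)
    (N : Set (EuclideanSpace ℝ (Fin 2))) (hN : MeasurableSet N)
    (hN0 : volume N = 0) :
    ∀ᵐ X ∂(volume : Measure (EuclideanSpace ℝ (Fin 2))),
      ∀ t ∈ Set.Ioc (0 : ℝ) T,
        volume {β ∈ Set.Icc (-t) t | X + β • w X ∈ N} = 0 := by
  set K' : NNReal := ⟨K, hK.le⟩
  have hw : LipschitzWith K' w :=
    LipschitzWith.of_dist_le_mul fun X Y => by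
      rw [dist_eq_norm, dist_eq_norm]; exact hlip X Y
  have hTK : T * K < 1 := (lt_div_iff₀ hK).1 (by simpa using hT)
  have hslices : ∀ᵐ β ∂volume.restrict (Set.Icc (-T) T),
      volume {X | X + β • w X ∈ N} = 0 := by
    refine (ae_restrict_iff' measurableSet_Icc).2 (.of_forall fun β hβ => ?_)
    have hβK : ‖β‖₊ * K' < 1 := by
      rw [← NNReal.coe_lt_coe, NNReal.coe_mul, coe_nnnorm, Real.norm_eq_abs]
      exact (mul_le_mul_of_nonneg_right (abs_le.2 hβ) hK.le).trans_lt hTK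
    exact (hw.antilipschitzWith_add_smul hβK).measure_preimage_null volume hN0
  have hcont : Continuous fun p : EuclideanSpace ℝ (Fin 2) × ℝ => p.1 + p.2 • w p.1 :=
    continuous_fst.add (continuous_snd.smul (hw.continuous.comp continuous_fst))
  filter_upwards [Measure.ae_measure_setOf_eq_zero_of_ae (p := fun X β => X + β • w X ∈ N)
    (hN.preimage hcont.measurable) hslices] with X hX t ht
  rw [Measure.restrict_apply' measurableSet_Icc] at hX
  refine measure_mono_null ?_ hX
  exact fun β hβ => ⟨hβ.2, Set.Icc_subset_Icc (neg_le_neg ht.2) ht.2 hβ.1⟩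

theorem zygmund_null_set_along_segments
    (w : EuclideanSpace ℝ (Fin 2) → EuclideanSpace ℝ (Fin 2)) (K T : ℝ)
    (hK : 0 < K) (hlip : ∀ X Y, ‖w X - w Y‖ ≤ K * ‖X - Y‖)
    (hunit : ∀ X, ‖w X‖ = 1) (hT0 : 0 < T) (hT : T < 1 / K)
    (N : Set (EuclideanSpace ℝ (Fin 2))) (hN : MeasurableSet N)
    (hN0 : volume N = 0) :
    ∀ᵐ X ∂(volume : Measure (EuclideanSpace ℝ (Fin 2))),
      ∀ t ∈ Set.Ioc (0 : ℝ) T,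
        volume {β ∈ Set.Icc (-t) t | X + β • w X ∈ N} = 0 :=
  zygmund_null_set_along_segments_general w K T hK hlip hT N hN hN0
end

section
/- Let v : ℝ² → ℝ² be a unit Lipschitz vector field with constant K and 0 < T < 1/K. For s ∈ [−T/2, T/2] and X, β with |β| ≤ T/2, the points X + β·v(S_{s_1}^{−1}(X)) and X + β·v(S_{s_2}^{−1}(X)) satisfy ‖(X + βv(S_{s_1}^{−1}X)) − (X + βv(S_{s_2}^{−1}X))‖ ≤ ((KT/2)/(1 − TK/2))·|s_1 − s_2| for all X ∈ ℝ² and all s_1, s_2 ∈ [−T/2, T/2]. -/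
open NNReal

namespace LipschitzWith

variable {E : Type*} [NormedAddCommGroup E] [NormedSpace ℝ E] {v : E → E} {K : ℝ≥0}

theorem surjective_add_smul [CompleteSpace E] (hv : LipschitzWith K v) {s : ℝ}
    (hs : |s| * K < 1) : Function.Surjective fun Y => Y + s • v Y := by
  intro X
  have hcontr : ContractingWith (‖s‖₊ * K) fun Z => X - s • v Z := by
    refine ⟨?_, ?_⟩
    · rw [← NNReal.coe_lt_coe]
      simpa using hs
    · simpa using (LipschitzWith.const X).sub ((lipschitzWith_smul s).comp hv)
  obtain ⟨Z, hZ, -⟩ := hcontr.exists_fixedPoint X (edist_ne_top _ _)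
  exact ⟨Z, (sub_eq_iff_eq_add.mp hZ.eq).symm⟩

theorem norm_sub_le_of_add_smul_eq (hv : LipschitzWith K v) {Z₁ Z₂ : E} {s₁ s₂ : ℝ}
    (h : Z₁ + s₁ • v Z₁ = Z₂ + s₂ • v Z₂) :
    (1 - |s₁| * K) * ‖Z₁ - Z₂‖ ≤ |s₁ - s₂| * ‖v Z₂‖ := by
  have hdecomp : Z₁ - Z₂ = (s₂ - s₁) • v Z₂ + s₁ • (v Z₂ - v Z₁) := by
    linear_combination (norm := module) h
  have hlip : ‖v Z₂ - v Z₁‖ ≤ K * ‖Z₁ - Z₂‖ := by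
    simpa only [norm_sub_rev] using hv.norm_sub_le Z₂ Z₁
  have htri : ‖Z₁ - Z₂‖ ≤ |s₁ - s₂| * ‖v Z₂‖ + |s₁| * ‖v Z₂ - v Z₁‖ := by
    calc ‖Z₁ - Z₂‖ ≤ ‖(s₂ - s₁) • v Z₂‖ + ‖s₁ • (v Z₂ - v Z₁)‖ := hdecomp ▸ norm_add_le _ _
      _ = |s₁ - s₂| * ‖v Z₂‖ + |s₁| * ‖v Z₂ - v Z₁‖ := by
        rw [norm_smul, norm_smul, Real.norm_eq_abs, Real.norm_eq_abs, abs_sub_comm]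
  nlinarith [mul_le_mul_of_nonneg_left hlip (abs_nonneg s₁)]

end LipschitzWith

theorem zygmund_uniform_s_estimate
    (v : EuclideanSpace ℝ (Fin 2) → EuclideanSpace ℝ (Fin 2)) (K T : ℝ)
    (hK : 0 < K) (hlip : ∀ X Y, ‖v X - v Y‖ ≤ K * ‖X - Y‖)
    (hunit : ∀ X, ‖v X‖ = 1) (hT0 : 0 < T) (hT : T < 1 / K)
    (β : ℝ) (hβ : |β| ≤ T / 2) :
    ∀ (X : EuclideanSpace ℝ (Fin 2)),
      ∀ s₁ ∈ Set.Icc (-(T / 2)) (T / 2), ∀ s₂ ∈ Set.Icc (-(T / 2)) (T / 2),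
        ‖(X + β • v (Function.invFun (fun Y => Y + s₁ • v Y) X)) -
            (X + β • v (Function.invFun (fun Y => Y + s₂ • v Y) X))‖
          ≤ ((K * T / 2) / (1 - T * K / 2)) * |s₁ - s₂| := by
  intro X s₁ hs₁ s₂ hs₂
  lift K to ℝ≥0 using hK.le
  have hv : LipschitzWith K v := LipschitzWith.of_dist_le_mul fun X Y => by
    simpa only [dist_eq_norm] using hlip X Y
  have hTK : T * K < 1 := by rwa [lt_div_iff₀ hK] at hT
  have hinv : ∀ s ∈ Set.Icc (-(T / 2)) (T / 2),
      Function.invFun (fun Y => Y + s • v Y) X + s • v (Function.invFun (fun Y => Y + s • v Y) X)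
        = X := fun s hs =>
    Function.rightInverse_invFun (hv.surjective_add_smul (by nlinarith [abs_le.mpr hs, K.2])) X
  set Z₁ := Function.invFun (fun Y => Y + s₁ • v Y) X
  set Z₂ := Function.invFun (fun Y => Y + s₂ • v Y) X
  have hZ : Z₁ + s₁ • v Z₁ = Z₂ + s₂ • v Z₂ := by rw [hinv s₁ hs₁, hinv s₂ hs₂]
  have hZdist := hv.norm_sub_le_of_add_smul_eq hZ
  rw [hunit, mul_one] at hZdist
  have hden : 0 < 1 - T * K / 2 := by linarith
  rw [add_sub_add_left_eq_sub, ← smul_sub, norm_smul, Real.norm_eq_abs, div_mul_eq_mul_div,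
    le_div_iff₀ hden]
  calc |β| * ‖v Z₁ - v Z₂‖ * (1 - T * K / 2)
      ≤ T / 2 * (K * ‖Z₁ - Z₂‖) * (1 - |s₁| * K) := by
        gcongr
        · exact hv.norm_sub_le Z₁ Z₂
        · nlinarith [abs_le.mpr hs₁, K.2]
    _ = T / 2 * K * ((1 - |s₁| * K) * ‖Z₁ - Z₂‖) := by ring
    _ ≤ T / 2 * K * |s₁ - s₂| := by gcongr
    _ = K * T / 2 * |s₁ - s₂| := by ring
end
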